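/- Let H be a finite regular graph with log-Sobolev constant at least α/k (in particular H = G^{□k}). Then for any t ≤ 1/e² and any h : V(H) → ℝ: ⟨h, L_H h⟩ ≥ (α/2k)·(√t log t · ‖h‖₁ + log t · ‖h‖₂² − ‖h‖₂² log ‖h‖₂²). -/

import Mathlib

open Finset BigOperators
open scoped Classical

/-- Expectation of `f` under the uniform measure on a finite type. -/
noncomputable def expec {V : Type*} [Fintype V] (f : V → ℝ) : ℝ :=
  (∑ x, f x) / (Fintype.card V : ℝ)

/-- Variance of `f` under the uniform measure. -/
noncomputable def varE {V : Type*} [Fintype V] (f : V → ℝ) : ℝ :=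
  expec (fun x => f x ^ 2) - (expec f) ^ 2

/-- The Laplacian quadratic form `⟨f, L_G f⟩ = (1/2)·E_{(x,y)∈E}[(f x − f y)²]` for a
`d`-regular graph `G`, with the uniform measure on (ordered) edges. -/
noncomputable def qform {V : Type*} [Fintype V] (G : SimpleGraph V) (d : ℕ)
    (f : V → ℝ) : ℝ :=
  (∑ x, ∑ y, if G.Adj x y then (f x - f y) ^ 2 else 0) /
    (2 * (d : ℝ) * (Fintype.card V : ℝ))

/-- The `k`-fold Cartesian power `G^{□k}` of a graph `G`. -/
def cartPow {V : Type*} (G : SimpleGraph V) (k : ℕ) : SimpleGraph (Fin k → V) where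
  Adj x y := ∃ j, G.Adj (x j) (y j) ∧ ∀ l, l ≠ j → x l = y l
  symm := by
    constructor
    rintro x y ⟨j, hadj, h⟩
    exact ⟨j, hadj.symm, fun l hl => (h l hl).symm⟩
  loopless := by
    constructor
    rintro x ⟨j, hadj, -⟩
    exact G.loopless.irrefl _ hadj

/-- The influence `⟨f, L_j f⟩` of coordinate `j` for a function on `V(G)^k`,
where `L_j` is the directional Laplacian of the `j`-th copy of the `d`-regular graph `G`. -/
noncomputable def influence {V : Type*} [Fintype V] [DecidableEq V] (G : SimpleGraph V)
    (d : ℕ) (k : ℕ) (f : (Fin k → V) → ℝ) (j : Fin k) : ℝ :=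
  (∑ x : Fin k → V, ∑ y : V,
      if G.Adj (x j) y then (f x - f (Function.update x j y)) ^ 2 else 0) /
    (2 * (d : ℝ) * ((Fintype.card V : ℝ)) ^ k)

/-- `Var_j(f) = ⟨f, K_j f⟩`: the expected conditional variance of `f` along coordinate `j`. -/
noncomputable def varAlong {V : Type*} [Fintype V] [DecidableEq V] (k : ℕ)
    (f : (Fin k → V) → ℝ) (j : Fin k) : ℝ :=
  expec (fun x : Fin k → V =>
    expec (fun y : V => f (Function.update x j y) ^ 2) -
      (expec (fun y : V => f (Function.update x j y))) ^ 2)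

/-- `Ent(f²) = E[f² log f²] − E[f²]·log E[f²]` under the uniform measure. -/
noncomputable def ent {V : Type*} [Fintype V] (f : V → ℝ) : ℝ :=
  expec (fun x => f x ^ 2 * Real.log (f x ^ 2)) -
    expec (fun x => f x ^ 2) * Real.log (expec (fun x => f x ^ 2))

/-- The set of constants `a` satisfying the log-Sobolev inequality
`⟨f, L_G f⟩ ≥ (a/2)·Ent(f²)` for all `f`; the log-Sobolev constant is its greatest element. -/
def lsSet {V : Type*} [Fintype V] (G : SimpleGraph V) (d : ℕ) : Set ℝ :=
  {a | ∀ f : V → ℝ, qform G d f ≥ a / 2 * ent f}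

/-- The conductance `Φ(G) = min over Boolean f of ⟨f, L_G f⟩ / (2 Var f)`. -/
noncomputable def conductance {V : Type*} [Fintype V] (G : SimpleGraph V) (d : ℕ) : ℝ :=
  sInf {r | ∃ f : V → ℝ, (∀ x, f x = 1 ∨ f x = -1) ∧ varE f ≠ 0 ∧
    r = qform G d f / (2 * varE f)}

/-!
Pointwise, `a² log a² ≥ √t log t · a + log t · a²` for `a ≥ 0` and `log t ≤ -2`: when `a² ≥ t` this
is monotonicity of `log`, and when `a² < t` it follows from `log (√t / a) ≤ √t / a - 1`. Averaging
with `a = |h x|` bounds `E[h² log h²]` from below, hence `Ent(h²)`, and the log-Sobolev inequality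
with constant `α / k` finishes the proof.
-/

namespace Real

lemma log_le_neg_two_of_le_one_div_exp_two {t : ℝ} (ht0 : 0 < t) (ht : t ≤ 1 / exp 2) :
    log t ≤ -2 := by
  simpa [log_div, log_exp] using log_le_log ht0 ht

lemma sqrt_mul_log_mul_add_log_mul_sq_le {t a : ℝ} (ht0 : 0 < t) (hlogt : log t ≤ -2)
    (ha : 0 ≤ a) :
    √t * log t * a + log t * a ^ 2 ≤ a ^ 2 * log (a ^ 2) := by
  rcases ha.eq_or_lt with rfl | ha
  · simp
  have hst : 0 < √t := sqrt_pos.mpr ht0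
  rcases le_or_gt t (a ^ 2) with hta | hat
  · have : log t ≤ log (a ^ 2) := log_le_log ht0 hta
    nlinarith [mul_pos hst ha, sq_nonneg a]
  · have hlog_sq : log (a ^ 2) = log t - 2 * log (√t / a) := by
      rw [log_div hst.ne' ha.ne', log_sqrt ht0.le, log_pow]
      ring
    have hlog_ratio : a ^ 2 * log (√t / a) ≤ a * √t - a ^ 2 := by
      calc a ^ 2 * log (√t / a) ≤ a ^ 2 * (√t / a - 1) :=
            mul_le_mul_of_nonneg_left (log_le_sub_one_of_pos (by positivity)) (by positivity)
        _ = a * √t - a ^ 2 := by field_simp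
    rw [hlog_sq]
    nlinarith [mul_pos hst ha]

end Real

section Expectation

variable {V : Type*} [Fintype V]

lemma expec_add (f g : V → ℝ) : expec (fun x => f x + g x) = expec f + expec g := by
  simp only [expec, sum_add_distrib, add_div]

lemma expec_const_mul (c : ℝ) (f : V → ℝ) : expec (fun x => c * f x) = c * expec f := by
  simp only [expec, ← mul_sum, mul_div_assoc]

lemma expec_mono {f g : V → ℝ} (hfg : ∀ x, f x ≤ g x) : expec f ≤ expec g := by
  unfold expec
  gcongr with x
  exact hfg x

lemma sqrt_mul_log_mul_expec_abs_add_le {t : ℝ} (ht0 : 0 < t) (hlogt : Real.log t ≤ -2)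
    (h : V → ℝ) :
    √t * Real.log t * expec (fun x => |h x|) + Real.log t * expec (fun x => h x ^ 2) ≤
      expec (fun x => h x ^ 2 * Real.log (h x ^ 2)) := by
  rw [← expec_const_mul, ← expec_const_mul, ← expec_add]
  refine expec_mono fun x => ?_
  simpa only [sq_abs] using Real.sqrt_mul_log_mul_add_log_mul_sq_le ht0 hlogt (abs_nonneg (h x))

lemma sqrt_mul_log_mul_expec_abs_add_sub_le_ent {t : ℝ} (ht0 : 0 < t) (hlogt : Real.log t ≤ -2)
    (h : V → ℝ) :
    √t * Real.log t * expec (fun x => |h x|) + Real.log t * expec (fun x => h x ^ 2) -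
        expec (fun x => h x ^ 2) * Real.log (expec (fun x => h x ^ 2)) ≤ ent h := by
  unfold ent
  linarith [sqrt_mul_log_mul_expec_abs_add_le ht0 hlogt h]

end Expectation

theorem stmt_10_general {V : Type*} [Fintype V]
    (H : SimpleGraph V) (dH : ℕ)
    (α : ℝ) (hα : 0 < α) (k : ℕ)
    (hls : (α / k) ∈ lsSet H dH)
    (t : ℝ) (ht0 : 0 < t) (ht : t ≤ 1 / Real.exp 2)
    (h : V → ℝ) :
    qform H dH h ≥ α / (2 * k) *
      (Real.sqrt t * Real.log t * expec (fun x => |h x|) +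
        Real.log t * expec (fun x => h x ^ 2) -
        expec (fun x => h x ^ 2) * Real.log (expec (fun x => h x ^ 2))) := by
  have hlogt := Real.log_le_neg_two_of_le_one_div_exp_two ht0 ht
  calc qform H dH h ≥ α / k / 2 * ent h := hls h
    _ = α / (2 * k) * ent h := by ring
    _ ≥ _ := by
      gcongr
      exact sqrt_mul_log_mul_expec_abs_add_sub_le_ent ht0 hlogt h

/-- If a finite regular graph `H` (e.g. `H = G^{□k}`) has log-Sobolev
constant at least `α/k`, then for any `0 < t ≤ 1/e²` and any `h : V(H) → ℝ`,
`⟨h, L_H h⟩ ≥ (α/2k)·(√t log t·‖h‖₁ + log t·‖h‖₂² − ‖h‖₂² log ‖h‖₂²)`. -/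
theorem stmt_10 {V : Type*} [Fintype V] [DecidableEq V] [Nonempty V]
    (H : SimpleGraph V) (dH : ℕ) (hd : 0 < dH) (hreg : H.IsRegularOfDegree dH)
    (α : ℝ) (hα : 0 < α) (k : ℕ) (hk : 0 < k)
    (hls : (α / k) ∈ lsSet H dH)
    (t : ℝ) (ht0 : 0 < t) (ht : t ≤ 1 / Real.exp 2)
    (h : V → ℝ) :
    qform H dH h ≥ α / (2 * k) *
      (Real.sqrt t * Real.log t * expec (fun x => |h x|) +
        Real.log t * expec (fun x => h x ^ 2) -
        expec (fun x => h x ^ 2) * Real.log (expec (fun x => h x ^ 2))) :=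
  stmt_10_general H dH α hα k hls t ht0 ht h
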